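/- arXiv:2511.03125 — 7 statements merged into one kernel-verified Lean document; each statement's English description precedes it below -/
import Mathlib

section
/- For every n ≥ 0 and every x ∈ D, setting A := K_n + σ² I_n, u := k_n(x_{n+1}), v := k_n(x), α := κ(x_{n+1}, x), and s := σ² + σ_n²(x_{n+1}), one has s > 0 and the one-step posterior-variance decrement identity σ_{n+1}²(x) = σ_n²(x) − (α − uᵀ A⁻¹ v)² / s. -/
open Matrix

/-- The `n × n` kernel matrix `K_n = [κ(x_i, x_j)]` built from the first `n`
points of the sequence `xs` (zero-indexed: `xs 0 = x_1`). -/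
noncomputable def kerMat {D : Type*} (κ : D → D → ℝ) (xs : ℕ → D) (n : ℕ) :
    Matrix (Fin n) (Fin n) ℝ :=
  Matrix.of fun i j => κ (xs i) (xs j)

/-- The kernel vector `k_n(x) = [κ(x_i, x)]_{i=1}^n`. -/
noncomputable def kerVec {D : Type*} (κ : D → D → ℝ) (xs : ℕ → D) (n : ℕ) (y : D) :
    Fin n → ℝ :=
  fun i => κ (xs i) y

/-- The posterior variance
`σ_n²(x) = κ(x,x) − k_n(x)ᵀ (K_n + σ² I_n)⁻¹ k_n(x)`;
for `n = 0` this is `κ(x,x)`. -/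
noncomputable def postVar {D : Type*} (κ : D → D → ℝ) (xs : ℕ → D) (σ2 : ℝ)
    (n : ℕ) (y : D) : ℝ :=
  κ y y -
    kerVec κ xs n y ⬝ᵥ
      ((kerMat κ xs n + σ2 • (1 : Matrix (Fin n) (Fin n) ℝ))⁻¹ *ᵥ kerVec κ xs n y)

/-!
Reindexing along `Fin (n + 1) ≃ Fin n ⊕ Fin 1`, the regularized kernel matrix `B` of the first
`n + 1` points becomes the bordered matrix `[[A, u], [uᵀ, κ(x_{n+1}, x_{n+1}) + σ²]]`, whose
Schur complement is `s = σ² + σ_n²(x_{n+1})`. Since `det B = det A * s` and both `A` and `B` are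
positive definite, `s > 0`. The vector `(A⁻¹ (v - t u), t)` with `t = (α - uᵀ A⁻¹ v) / s` solves
`B w = (v, α)`, and pairing it with `(v, α)` gives
`k_{n+1}(x)ᵀ B⁻¹ k_{n+1}(x) = vᵀ A⁻¹ v + (α - uᵀ A⁻¹ v)² / s`.
-/

theorem Matrix.IsSymm.dotProduct_mulVec_comm {𝕜 m : Type*} [CommSemiring 𝕜] [Fintype m]
    {M : Matrix m m 𝕜} (hM : M.IsSymm) (u v : m → 𝕜) : u ⬝ᵥ (M *ᵥ v) = v ⬝ᵥ (M *ᵥ u) := by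
  rw [dotProduct_mulVec, ← mulVec_transpose, hM.eq, dotProduct_comm]

theorem dotProduct_inv_submatrix_mulVec_comp_equiv {𝕜 m n : Type*} [Field 𝕜] [Fintype m]
    [DecidableEq m] [Fintype n] [DecidableEq n] (B : Matrix n n 𝕜) (e : m ≃ n) (w : n → 𝕜) :
    (w ∘ e) ⬝ᵥ ((B.submatrix e e)⁻¹ *ᵥ (w ∘ e)) = w ⬝ᵥ (B⁻¹ *ᵥ w) := by
  simp [inv_submatrix_equiv, submatrix_mulVec_equiv, Function.comp_assoc]

def borderedMatrix {𝕜 m : Type*} (ι : Type*) (A : Matrix m m 𝕜) (u : m → 𝕜) (d : 𝕜) :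
    Matrix (m ⊕ ι) (m ⊕ ι) 𝕜 :=
  fromBlocks A (replicateCol ι u) (replicateRow ι u) (of fun _ _ => d)

theorem borderedMatrix_add_smul_one {𝕜 m ι : Type*} [Field 𝕜] [DecidableEq m] [Unique ι]
    [DecidableEq ι] (A : Matrix m m 𝕜) (u : m → 𝕜) (d c : 𝕜) :
    borderedMatrix ι A u d + c • 1 = borderedMatrix ι (A + c • 1) u (d + c) := by
  rw [borderedMatrix, borderedMatrix, ← fromBlocks_one, fromBlocks_smul, fromBlocks_add]
  congr
  · simp
  · simp
  · ext; simp [Subsingleton.elim _ default]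

section BorderedMatrix

variable {𝕜 m ι : Type*} [Field 𝕜] [Fintype m] [Fintype ι] [Unique ι] {A : Matrix m m 𝕜}
  {u : m → 𝕜} {d : 𝕜}

theorem borderedMatrix_mulVec_sumElim (x : m → 𝕜) (t : 𝕜) :
    borderedMatrix ι A u d *ᵥ Sum.elim x (fun _ => t) =
      Sum.elim (A *ᵥ x + t • u) (fun _ => u ⬝ᵥ x + d * t) := by
  ext (i | i) <;> simp [borderedMatrix, mulVec, dotProduct, mul_comm]

variable [DecidableEq m] [DecidableEq ι]

theorem det_borderedMatrix (hA : IsUnit A.det) :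
    (borderedMatrix ι A u d).det = A.det * (d - u ⬝ᵥ (A⁻¹ *ᵥ u)) := by
  let := invertibleOfIsUnitDet A hA
  rw [borderedMatrix, det_fromBlocks₁₁, det_unique (n := ι), invOf_eq_nonsing_inv,
    ← replicateRow_vecMul, Matrix.sub_apply, of_apply, replicateRow_mul_replicateCol_apply,
    dotProduct_mulVec]

theorem sumElim_dotProduct_inv_borderedMatrix_mulVec (hA : IsUnit A.det) (hAsymm : A.IsSymm)
    (hs : d - u ⬝ᵥ (A⁻¹ *ᵥ u) ≠ 0) (v : m → 𝕜) (a : 𝕜) :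
    Sum.elim v (fun _ => a) ⬝ᵥ ((borderedMatrix ι A u d)⁻¹ *ᵥ Sum.elim v (fun _ => a)) =
      v ⬝ᵥ (A⁻¹ *ᵥ v) + (a - u ⬝ᵥ (A⁻¹ *ᵥ v)) ^ 2 / (d - u ⬝ᵥ (A⁻¹ *ᵥ u)) := by
  set s := d - u ⬝ᵥ (A⁻¹ *ᵥ u)
  set t := (a - u ⬝ᵥ (A⁻¹ *ᵥ v)) / s with ht
  have hts : t * s = a - u ⬝ᵥ (A⁻¹ *ᵥ v) := div_mul_cancel₀ _ hs
  have hB : IsUnit (borderedMatrix ι A u d).det := by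
    rw [det_borderedMatrix hA]
    exact hA.mul (IsUnit.mk0 s hs)
  let := invertibleOfIsUnitDet _ hB
  have hsol : (borderedMatrix ι A u d)⁻¹ *ᵥ Sum.elim v (fun _ => a) =
      Sum.elim (A⁻¹ *ᵥ (v - t • u)) (fun _ => t) := by
    refine inv_mulVec_eq_vec ?_
    rw [borderedMatrix_mulVec_sumElim, mulVec_mulVec, mul_nonsing_inv _ hA, one_mulVec,
      sub_add_cancel]
    congr 1
    ext
    rw [mulVec_sub, mulVec_smul, dotProduct_sub, dotProduct_smul, smul_eq_mul]
    linear_combination -hts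
  rw [hsol, sumElim_dotProduct_sumElim, mulVec_sub, mulVec_smul, dotProduct_sub,
    dotProduct_smul, hAsymm.inv.dotProduct_mulVec_comm v u,
    show ((fun _ => a) ⬝ᵥ fun _ : ι => t) = a * t from Fintype.sum_unique _, smul_eq_mul, ht]
  ring

end BorderedMatrix

theorem sub_dotProduct_inv_mulVec_pos_of_posDef_borderedMatrix {m ι : Type*} [Fintype m]
    [DecidableEq m] [Fintype ι] [DecidableEq ι] [Unique ι] {A : Matrix m m ℝ} {u : m → ℝ}
    {d : ℝ} (hB : (borderedMatrix ι A u d).PosDef) : 0 < d - u ⬝ᵥ (A⁻¹ *ᵥ u) := by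
  have hA : A.PosDef := hB.submatrix Sum.inl_injective
  have hdet := hB.det_pos
  rw [det_borderedMatrix hA.det_pos.ne'.isUnit] at hdet
  exact pos_of_mul_pos_right hdet hA.det_pos.le

section Kernel

variable {D : Type*} (κ : D → D → ℝ) (xs : ℕ → D)

theorem kerMat_add_smul_one_posDef
    (hpsd : ∀ (n : ℕ) (z : Fin n → D), (Matrix.of fun i j => κ (z i) (z j)).PosSemidef)
    {σ2 : ℝ} (hσ2 : 0 < σ2) (n : ℕ) :
    (kerMat κ xs n + σ2 • (1 : Matrix (Fin n) (Fin n) ℝ)).PosDef :=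
  PosDef.posSemidef_add (hpsd n fun i => xs i) (PosDef.one.smul hσ2)

theorem kerMat_succ_submatrix_finSumFinEquiv (hsymm : ∀ a b : D, κ a b = κ b a) (n : ℕ) :
    (kerMat κ xs (n + 1)).submatrix finSumFinEquiv finSumFinEquiv =
      borderedMatrix (Fin 1) (kerMat κ xs n) (kerVec κ xs n (xs n)) (κ (xs n) (xs n)) := by
  ext (i | i) (j | j) <;> simp [borderedMatrix, kerMat, kerVec, hsymm (xs n)]

theorem kerVec_succ_comp_finSumFinEquiv (n : ℕ) (y : D) :
    kerVec κ xs (n + 1) y ∘ finSumFinEquiv = Sum.elim (kerVec κ xs n y) fun _ => κ (xs n) y := by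
  ext (i | i) <;> simp [kerVec]

end Kernel

theorem posterior_variance_decrement_general {D : Type*}
    (κ : D → D → ℝ)
    (hsymm : ∀ a b : D, κ a b = κ b a)
    (hpsd : ∀ (n : ℕ) (z : Fin n → D),
      (Matrix.of fun i j => κ (z i) (z j)).PosSemidef)
    (σ2 : ℝ) (hσ2 : 0 < σ2)
    (xs : ℕ → D) (n : ℕ) (y : D) :
    0 < σ2 + postVar κ xs σ2 n (xs n) ∧
      postVar κ xs σ2 (n + 1) y =
        postVar κ xs σ2 n y -
          (κ (xs n) y -
              kerVec κ xs n (xs n) ⬝ᵥ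
                ((kerMat κ xs n + σ2 • (1 : Matrix (Fin n) (Fin n) ℝ))⁻¹ *ᵥ
                  kerVec κ xs n y)) ^ 2 /
            (σ2 + postVar κ xs σ2 n (xs n)) := by
  set A := kerMat κ xs n + σ2 • (1 : Matrix (Fin n) (Fin n) ℝ) with hA_def
  set u := kerVec κ xs n (xs n) with hu_def
  have hA : A.PosDef := kerMat_add_smul_one_posDef κ xs hpsd hσ2 n
  have hB : (kerMat κ xs (n + 1) + σ2 • 1).submatrix finSumFinEquiv finSumFinEquiv =
      borderedMatrix (Fin 1) A u (κ (xs n) (xs n) + σ2) := by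
    simp only [submatrix_add, submatrix_smul, Pi.add_apply, Pi.smul_apply, submatrix_one_equiv,
      kerMat_succ_submatrix_finSumFinEquiv κ xs hsymm, borderedMatrix_add_smul_one, ← hA_def,
      ← hu_def]
  have hs : σ2 + postVar κ xs σ2 n (xs n) = κ (xs n) (xs n) + σ2 - u ⬝ᵥ (A⁻¹ *ᵥ u) := by
    unfold postVar
    ring
  have hschur : 0 < κ (xs n) (xs n) + σ2 - u ⬝ᵥ (A⁻¹ *ᵥ u) := by
    have hB_pos := (kerMat_add_smul_one_posDef κ xs hpsd hσ2 (n + 1)).submatrix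
      finSumFinEquiv.injective
    rw [hB] at hB_pos
    exact sub_dotProduct_inv_mulVec_pos_of_posDef_borderedMatrix hB_pos
  rw [hs]
  refine ⟨hschur, ?_⟩
  simp only [postVar, ← hA_def]
  rw [← dotProduct_inv_submatrix_mulVec_comp_equiv _ finSumFinEquiv, hB,
    kerVec_succ_comp_finSumFinEquiv, sumElim_dotProduct_inv_borderedMatrix_mulVec
      hA.det_pos.ne'.isUnit (isHermitian_iff_isSymm.mp hA.isHermitian) hschur.ne']
  ring

/-- One-step posterior-variance decrement identity: with
`A = K_n + σ² I_n`, `u = k_n(x_{n+1})`, `v = k_n(x)`, `α = κ(x_{n+1}, x)` and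
`s = σ² + σ_n²(x_{n+1})`, one has `s > 0` and
`σ_{n+1}²(x) = σ_n²(x) − (α − uᵀ A⁻¹ v)² / s`. -/
theorem posterior_variance_decrement {D : Type*} [Nonempty D]
    (κ : D → D → ℝ)
    (hsymm : ∀ a b : D, κ a b = κ b a)
    (hpsd : ∀ (n : ℕ) (z : Fin n → D),
      (Matrix.of fun i j => κ (z i) (z j)).PosSemidef)
    (σ2 : ℝ) (hσ2 : 0 < σ2)
    (xs : ℕ → D) (n : ℕ) (y : D) :
    0 < σ2 + postVar κ xs σ2 n (xs n) ∧
      postVar κ xs σ2 (n + 1) y =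
        postVar κ xs σ2 n y -
          (κ (xs n) y -
              kerVec κ xs n (xs n) ⬝ᵥ
                ((kerMat κ xs n + σ2 • (1 : Matrix (Fin n) (Fin n) ℝ))⁻¹ *ᵥ
                  kerVec κ xs n y)) ^ 2 /
            (σ2 + postVar κ xs σ2 n (xs n)) :=
  posterior_variance_decrement_general κ hsymm hpsd σ2 hσ2 xs n y
end

section
/- The posterior variance sequence is monotonically non-increasing: for every n ≥ 0 and every x ∈ D, σ_{n+1}²(x) ≤ σ_n²(x). -/
open Matrix

/-!
Write `M_n = K_n + σ² I_n`. Then `k_n(x)ᵀ M_n⁻¹ k_n(x) = sup_w (2 wᵀ k_n(x) - wᵀ M_n w)`,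
and `M_n`, `k_n(x)` are the leading block of `M_{n+1}`, `k_{n+1}(x)`: padding any `w` with a
zero entry shows that the supremum can only grow with `n`, so `σ_n²(x)` can only shrink.
-/

namespace Matrix

variable {ι ι' : Type*} [Fintype ι] [Fintype ι']

theorem PosSemidef.two_mul_dotProduct_mulVec_sub_le {M : Matrix ι ι ℝ} (hM : M.PosSemidef)
    (u w : ι → ℝ) : 2 * (w ⬝ᵥ M *ᵥ u) - w ⬝ᵥ M *ᵥ w ≤ u ⬝ᵥ M *ᵥ u := by
  have hsymm : w ⬝ᵥ M *ᵥ u = u ⬝ᵥ M *ᵥ w := by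
    rw [dotProduct_mulVec, ← mulVec_transpose, dotProduct_comm,
      (isHermitian_iff_isSymm.1 hM.isHermitian).eq]
  have h := hM.dotProduct_mulVec_nonneg (u - w)
  simp only [star_trivial, mulVec_sub, sub_dotProduct, dotProduct_sub] at h
  linarith

variable [DecidableEq ι] [DecidableEq ι']

theorem PosDef.two_mul_dotProduct_sub_le_dotProduct_inv_mulVec {M : Matrix ι ι ℝ}
    (hM : M.PosDef) (k w : ι → ℝ) : 2 * (w ⬝ᵥ k) - w ⬝ᵥ M *ᵥ w ≤ k ⬝ᵥ M⁻¹ *ᵥ k := by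
  have hMu : M *ᵥ M⁻¹ *ᵥ k = k := by
    rw [mulVec_mulVec, mul_nonsing_inv _ ((isUnit_iff_isUnit_det M).1 hM.isUnit), one_mulVec]
  simpa only [hMu, dotProduct_comm (M⁻¹ *ᵥ k)] using
    hM.posSemidef.two_mul_dotProduct_mulVec_sub_le (M⁻¹ *ᵥ k) w

theorem PosDef.dotProduct_inv_mulVec_transpose_mul_mul_le {M : Matrix ι ι ℝ} (hM : M.PosDef)
    (E : Matrix ι ι' ℝ) (hE : IsUnit (Eᵀ * M * E).det) (k : ι → ℝ) :
    (Eᵀ *ᵥ k) ⬝ᵥ (Eᵀ * M * E)⁻¹ *ᵥ (Eᵀ *ᵥ k) ≤ k ⬝ᵥ M⁻¹ *ᵥ k := by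
  set v := (Eᵀ * M * E)⁻¹ *ᵥ (Eᵀ *ᵥ k)
  have hNv : (Eᵀ * M * E) *ᵥ v = Eᵀ *ᵥ k := by
    rw [mulVec_mulVec, mul_nonsing_inv _ hE, one_mulVec]
  clear_value v
  have hlin : (E *ᵥ v) ⬝ᵥ k = v ⬝ᵥ (Eᵀ *ᵥ k) := by
    rw [← vecMul_transpose, ← dotProduct_mulVec]
  have hquad : (E *ᵥ v) ⬝ᵥ M *ᵥ (E *ᵥ v) = v ⬝ᵥ (Eᵀ *ᵥ k) := by
    rw [← hNv, Matrix.mul_assoc, ← mulVec_mulVec, ← mulVec_mulVec, dotProduct_mulVec v,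
      vecMul_transpose]
  have hvar := hM.two_mul_dotProduct_sub_le_dotProduct_inv_mulVec k (E *ᵥ v)
  rw [hlin, hquad, dotProduct_comm v] at hvar
  linarith

theorem PosDef.dotProduct_inv_mulVec_submatrix_le {M : Matrix ι' ι' ℝ} (hM : M.PosDef)
    {e : ι → ι'} (he : Function.Injective e) (k : ι' → ℝ) :
    (k ∘ e) ⬝ᵥ (M.submatrix e e)⁻¹ *ᵥ (k ∘ e) ≤ k ⬝ᵥ M⁻¹ *ᵥ k := by
  set E := (1 : Matrix ι' ι' ℝ).submatrix id e
  have hk : Eᵀ *ᵥ k = k ∘ e := by ext i; simp [E, mulVec, dotProduct, one_apply]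
  have hEME : Eᵀ * M * E = M.submatrix e e := by ext i j; simp [E, mul_apply, one_apply]
  have hE : IsUnit (Eᵀ * M * E).det := by
    rw [hEME, ← isUnit_iff_isUnit_det]; exact (hM.submatrix he).isUnit
  simpa only [hk, hEME] using hM.dotProduct_inv_mulVec_transpose_mul_mul_le E hE k

end Matrix

theorem kerMat_add_smul_one_submatrix_castSucc {D : Type*} (κ : D → D → ℝ) (xs : ℕ → D)
    (σ2 : ℝ) (n : ℕ) :
    (kerMat κ xs (n + 1) + σ2 • (1 : Matrix (Fin (n + 1)) (Fin (n + 1)) ℝ)).submatrix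
        Fin.castSucc Fin.castSucc = kerMat κ xs n + σ2 • (1 : Matrix (Fin n) (Fin n) ℝ) := by
  ext i j
  simp [kerMat, one_apply]

theorem kerVec_comp_castSucc {D : Type*} (κ : D → D → ℝ) (xs : ℕ → D) (n : ℕ) (y : D) :
    kerVec κ xs (n + 1) y ∘ Fin.castSucc = kerVec κ xs n y :=
  rfl

theorem posterior_variance_antitone_general {D : Type*}
    (κ : D → D → ℝ)
    (hpsd : ∀ (n : ℕ) (z : Fin n → D),
      (Matrix.of fun i j => κ (z i) (z j)).PosSemidef)
    (σ2 : ℝ) (hσ2 : 0 < σ2)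
    (xs : ℕ → D) (n : ℕ) (y : D) :
    postVar κ xs σ2 (n + 1) y ≤ postVar κ xs σ2 n y := by
  have hM : (kerMat κ xs (n + 1) + σ2 • (1 : Matrix (Fin (n + 1)) (Fin (n + 1)) ℝ)).PosDef :=
    PosDef.posSemidef_add (hpsd (n + 1) fun i => xs i) (PosDef.one.smul hσ2)
  have hquad := hM.dotProduct_inv_mulVec_submatrix_le (Fin.castSucc_injective n)
    (kerVec κ xs (n + 1) y)
  rw [kerMat_add_smul_one_submatrix_castSucc, kerVec_comp_castSucc] at hquad
  unfold postVar
  linarith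

/-- The posterior variance sequence is monotonically non-increasing:
for every `n ≥ 0` and every `x ∈ D`, `σ_{n+1}²(x) ≤ σ_n²(x)`. -/
theorem posterior_variance_antitone {D : Type*} [Nonempty D]
    (κ : D → D → ℝ)
    (hsymm : ∀ a b : D, κ a b = κ b a)
    (hpsd : ∀ (n : ℕ) (z : Fin n → D),
      (Matrix.of fun i j => κ (z i) (z j)).PosSemidef)
    (σ2 : ℝ) (hσ2 : 0 < σ2)
    (xs : ℕ → D) (n : ℕ) (y : D) :
    postVar κ xs σ2 (n + 1) y ≤ postVar κ xs σ2 n y :=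
  posterior_variance_antitone_general κ hpsd σ2 hσ2 xs n y
end

section
/- Suppose that for all x ∈ D, |f(x) − μ_g(x) − μ_δ(x)| ≤ √β · √(v_g(x) + v_δ(x)). Let x_t ∈ D be a maximizer over D of the acquisition function x ↦ μ_g(x) + μ_δ(x) + √β · √(v_g(x) + v_δ(x)). Then the instantaneous regret satisfies f(x*) − f(x_t) ≤ 2√β · √(v_g(x_t) + v_δ(x_t)). -/
/-- UCB instantaneous regret bound: if for all `x`,
`|f(x) − μ_g(x) − μ_δ(x)| ≤ √β √(v_g(x) + v_δ(x))`, and `x_t` maximizes the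
acquisition function `μ_g + μ_δ + √β √(v_g + v_δ)` over `D`, then
`f(x*) − f(x_t) ≤ 2 √β √(v_g(x_t) + v_δ(x_t))`. -/
theorem instantaneous_regret_bound {D : Type*} [Fintype D] [Nonempty D]
    (f μg μδ vg vδ : D → ℝ) (β : ℝ) (hβ : 0 ≤ β)
    (hvg : ∀ x, 0 ≤ vg x) (hvδ : ∀ x, 0 ≤ vδ x)
    (xstar : D) (hstar : ∀ x, f x ≤ f xstar)
    (hconf : ∀ x, |f x - μg x - μδ x| ≤ Real.sqrt β * Real.sqrt (vg x + vδ x))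
    (xt : D)
    (hmax : ∀ x, μg x + μδ x + Real.sqrt β * Real.sqrt (vg x + vδ x) ≤
      μg xt + μδ xt + Real.sqrt β * Real.sqrt (vg xt + vδ xt)) :
    f xstar - f xt ≤ 2 * Real.sqrt β * Real.sqrt (vg xt + vδ xt) := by
  have h1 := abs_le.1 (hconf xstar)
  have h2 := abs_le.1 (hconf xt)
  have h3 := hmax xstar
  linarith [h1.1, h1.2, h2.1, h2.2]
end

section
/- Let B ≥ σ², γ ≥ 0, and let a_1, …, a_T and b_1, …, b_T be real numbers with 0 ≤ a_t ≤ τ² and σ² ≤ b_t ≤ B for all t. If ∑_{t=1}^T log(1 + a_t / b_t) ≤ 2γ, then ∑_{t=1}^T a_t ≤ 2 C_2 B γ. -/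
/-- The constant `C_2 = (τ²/σ²) / log(1 + τ²/σ²)`. -/
noncomputable def Ctwo (σ τ : ℝ) : ℝ :=
  (τ ^ 2 / σ ^ 2) / Real.log (1 + τ ^ 2 / σ ^ 2)

lemma key_concave {c x : ℝ} (hc : 0 < c) (hx0 : 0 ≤ x) (hxc : x ≤ c) :
    x ≤ c / Real.log (1 + c) * Real.log (1 + x) := by
  have hlc : 0 < Real.log (1 + c) := Real.log_pos (by linarith)
  have hp0 : 0 ≤ x / c := div_nonneg hx0 hc.le
  have hp1 : x / c ≤ 1 := (div_le_one hc).2 hxc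
  have h := rpow_one_add_le_one_add_mul_self (s := c) (by linarith) hp0 hp1
  have h1c : (0:ℝ) < 1 + c := by linarith
  have hlog : (x / c) * Real.log (1 + c) ≤ Real.log (1 + x / c * c) := by
    calc (x / c) * Real.log (1 + c) = Real.log ((1 + c) ^ (x / c)) :=
          (Real.log_rpow h1c _).symm
      _ ≤ Real.log (1 + x / c * c) := by
          apply Real.log_le_log (Real.rpow_pos_of_pos h1c _) h
  rw [div_mul_cancel₀ _ hc.ne'] at hlog
  rw [div_mul_eq_mul_div, le_div_iff₀ hlc]
  calc x * Real.log (1 + c) = (x / c) * Real.log (1 + c) * c := by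
        field_simp
    _ ≤ Real.log (1 + x) * c := by
        apply mul_le_mul_of_nonneg_right hlog hc.le
    _ = c * Real.log (1 + x) := mul_comm _ _

/-- If `0 ≤ a_t ≤ τ²` and `σ² ≤ b_t ≤ B` for all `t`, and
`∑_{t=1}^T log(1 + a_t/b_t) ≤ 2γ`, then `∑_{t=1}^T a_t ≤ 2 C_2 B γ`. -/
theorem sum_le_C2_gain (σ τ : ℝ) (hσ : 0 < σ) (hτ : 0 < τ)
    (B γ : ℝ) (hB : σ ^ 2 ≤ B) (hγ : 0 ≤ γ)
    (T : ℕ) (a b : Fin T → ℝ)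
    (ha0 : ∀ t, 0 ≤ a t) (haτ : ∀ t, a t ≤ τ ^ 2)
    (hbσ : ∀ t, σ ^ 2 ≤ b t) (hbB : ∀ t, b t ≤ B)
    (hsum : ∑ t : Fin T, Real.log (1 + a t / b t) ≤ 2 * γ) :
    ∑ t : Fin T, a t ≤ 2 * Ctwo σ τ * B * γ := by
  have hσ2 : (0:ℝ) < σ ^ 2 := by positivity
  have hc : (0:ℝ) < τ ^ 2 / σ ^ 2 := by positivity
  have hlc : 0 < Real.log (1 + τ ^ 2 / σ ^ 2) := Real.log_pos (by linarith)
  have hC : 0 < Ctwo σ τ := div_pos hc hlc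
  have hBpos : 0 < B := lt_of_lt_of_le hσ2 hB
  have hstep : ∀ t, a t ≤ Ctwo σ τ * B * Real.log (1 + a t / b t) := by
    intro t
    have hbt : 0 < b t := lt_of_lt_of_le hσ2 (hbσ t)
    have hx0 : 0 ≤ a t / b t := div_nonneg (ha0 t) hbt.le
    have hxc : a t / b t ≤ τ ^ 2 / σ ^ 2 :=
      div_le_div₀ (by positivity) (haτ t) hσ2 (hbσ t)
    have hkey := key_concave hc hx0 hxc
    have hlog0 : 0 ≤ Real.log (1 + a t / b t) := Real.log_nonneg (by linarith)
    calc a t = (a t / b t) * b t := by field_simp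
      _ ≤ (a t / b t) * B := mul_le_mul_of_nonneg_left (hbB t) hx0
      _ ≤ Ctwo σ τ * Real.log (1 + a t / b t) * B := by
          apply mul_le_mul_of_nonneg_right _ hBpos.le
          simpa [Ctwo] using hkey
      _ = Ctwo σ τ * B * Real.log (1 + a t / b t) := by ring
  calc ∑ t : Fin T, a t ≤ ∑ t : Fin T, Ctwo σ τ * B * Real.log (1 + a t / b t) :=
        Finset.sum_le_sum fun t _ => hstep t
    _ = Ctwo σ τ * B * ∑ t : Fin T, Real.log (1 + a t / b t) := by
        rw [Finset.mul_sum]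
    _ ≤ Ctwo σ τ * B * (2 * γ) := by
        apply mul_le_mul_of_nonneg_left hsum (by positivity)
    _ = 2 * Ctwo σ τ * B * γ := by ring
end

section
/- Let d, T ≥ 1, σ > 0, τ > 0, and let x_1, …, x_T ∈ ℝ^d with ‖x_i‖ ≤ 1 for every i. Let K be the T×T matrix with entries K_{ij} = τ² ⟨x_i, x_j⟩. Then the Gaussian information gain of the amplitude-scaled linear kernel satisfies (1/2) · log det(I_T + σ^{-2} K) ≤ (d/2) · log(1 + τ² T / σ²). -/
/-!
Write `σ⁻²K = c · XᵀX` with `c = τ²/σ²` and `X` the `d × T` matrix with columns `x_i`. By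
Sylvester's determinant identity `det(I_T + c XᵀX) = det(I_d + c XXᵀ)`, a determinant of size `d`.
By Cauchy–Schwarz, `vᵀ XXᵀ v = ∑ᵢ ⟨x_i, v⟩² ≤ T ‖v‖²`, so every eigenvalue of the positive
semidefinite matrix `I_d + c XXᵀ` lies in `[0, 1 + cT]` and its determinant is at most `(1 + cT)^d`.
-/

open Matrix
open scoped RealInnerProductSpace

namespace Matrix

variable {n : Type*} [Fintype n] [DecidableEq n]

theorem IsHermitian.eigenvalues_le_of_dotProduct_mulVec_le {A : Matrix n n ℝ}
    (hA : A.IsHermitian) {b : ℝ} (hb : ∀ v, v ⬝ᵥ A *ᵥ v ≤ b * (v ⬝ᵥ v)) (i : n) :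
    hA.eigenvalues i ≤ b := by
  have hunit : ⇑(hA.eigenvectorBasis i) ⬝ᵥ ⇑(hA.eigenvectorBasis i) = 1 := by
    have := inner_self_eq_one_of_norm_eq_one (𝕜 := ℝ) (hA.eigenvectorBasis.orthonormal.1 i)
    rwa [EuclideanSpace.inner_eq_star_dotProduct, star_trivial] at this
  simpa [hA.eigenvalues_eq i, hunit] using hb (hA.eigenvectorBasis i)

theorem PosSemidef.det_le_pow_of_dotProduct_mulVec_le {A : Matrix n n ℝ}
    (hA : A.PosSemidef) {b : ℝ} (hb : ∀ v, v ⬝ᵥ A *ᵥ v ≤ b * (v ⬝ᵥ v)) :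
    A.det ≤ b ^ Fintype.card n := by
  rw [hA.isHermitian.det_eq_prod_eigenvalues]
  calc ∏ i, (hA.isHermitian.eigenvalues i : ℝ)
      ≤ ∏ _i : n, b := Finset.prod_le_prod (fun i _ => hA.eigenvalues_nonneg i)
        fun i _ => hA.isHermitian.eigenvalues_le_of_dotProduct_mulVec_le hb i
    _ = b ^ Fintype.card n := by simp

end Matrix

section columnMatrix

variable {ι κ : Type*} [Fintype κ]

def columnMatrix (x : ι → EuclideanSpace ℝ κ) : Matrix κ ι ℝ :=
  of fun k i => x i k

theorem gram_eq_columnMatrix_transpose_mul (x : ι → EuclideanSpace ℝ κ) :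
    gram ℝ x = (columnMatrix x)ᵀ * columnMatrix x := by
  simpa [columnMatrix] using gram_eq_conjTranspose_mul (EuclideanSpace.basisFun κ ℝ) x

theorem dotProduct_columnMatrix_mul_transpose_mulVec_le [Fintype ι]
    (x : ι → EuclideanSpace ℝ κ) (hx : ∀ i, ‖x i‖ ≤ 1) (v : κ → ℝ) :
    v ⬝ᵥ (columnMatrix x * (columnMatrix x)ᵀ) *ᵥ v ≤ Fintype.card ι * (v ⬝ᵥ v) := by
  have hv : ‖WithLp.toLp 2 v‖ ^ 2 = v ⬝ᵥ v := by
    rw [← real_inner_self_eq_norm_sq, EuclideanSpace.inner_toLp_toLp, star_trivial]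
  calc v ⬝ᵥ (columnMatrix x * (columnMatrix x)ᵀ) *ᵥ v
      = ∑ i, ⟪x i, WithLp.toLp 2 v⟫ ^ 2 := by
        rw [← mulVec_mulVec, dotProduct_mulVec, ← mulVec_transpose]
        simp [columnMatrix, dotProduct, mulVec, EuclideanSpace.inner_eq_star_dotProduct, sq,
          mul_comm]
    _ ≤ ∑ _i : ι, ‖WithLp.toLp 2 v‖ ^ 2 := by
        refine Finset.sum_le_sum fun i _ => ?_
        calc ⟪x i, WithLp.toLp 2 v⟫ ^ 2 = |⟪x i, WithLp.toLp 2 v⟫| ^ 2 := (sq_abs _).symm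
          _ ≤ (‖x i‖ * ‖WithLp.toLp 2 v‖) ^ 2 := by gcongr; exact abs_real_inner_le_norm _ _
          _ ≤ ‖WithLp.toLp 2 v‖ ^ 2 := by
            gcongr; exact mul_le_of_le_one_left (norm_nonneg _) (hx i)
    _ = Fintype.card ι * (v ⬝ᵥ v) := by simp [hv]

theorem det_one_add_smul_gram_le [Fintype ι] [DecidableEq ι] [DecidableEq κ]
    (x : ι → EuclideanSpace ℝ κ) (hx : ∀ i, ‖x i‖ ≤ 1) {c : ℝ} (hc : 0 ≤ c) :
    (1 + c • gram ℝ x).det ≤ (1 + c * Fintype.card ι) ^ Fintype.card κ := by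
  set X := columnMatrix x
  have hsylvester : (1 + c • gram ℝ x).det = (1 + c • (X * Xᵀ)).det := by
    rw [gram_eq_columnMatrix_transpose_mul, ← smul_mul, det_one_add_mul_comm, Matrix.mul_smul]
  rw [hsylvester]
  refine PosSemidef.det_le_pow_of_dotProduct_mulVec_le ?_ fun v => ?_
  · simpa using PosSemidef.one.add ((posSemidef_self_mul_conjTranspose X).smul hc)
  · have := dotProduct_columnMatrix_mul_transpose_mulVec_le x hx v
    simp only [add_mulVec, one_mulVec, smul_mulVec, dotProduct_add, dotProduct_smul, smul_eq_mul]
    nlinarith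

end columnMatrix

theorem linear_kernel_information_gain_general (d T : ℕ)
    (σ τ : ℝ)
    (x : Fin T → EuclideanSpace ℝ (Fin d)) (hx : ∀ i, ‖x i‖ ≤ 1)
    (K : Matrix (Fin T) (Fin T) ℝ)
    (hK : ∀ i j, K i j = τ ^ 2 * ⟪x i, x j⟫) :
    (1 / 2 : ℝ) * Real.log ((1 + (σ ^ 2)⁻¹ • K).det) ≤
      (d / 2 : ℝ) * Real.log (1 + τ ^ 2 * T / σ ^ 2) := by
  set c := (σ ^ 2)⁻¹ * τ ^ 2
  have hc : 0 ≤ c := by positivity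
  have hKgram : (σ ^ 2)⁻¹ • K = c • gram ℝ x := by
    ext i j
    simp [c, hK, gram_apply, mul_assoc]
  have hdet_pos : 0 < (1 + c • gram ℝ x).det :=
    (PosDef.one.add_posSemidef ((posSemidef_gram ℝ x).smul hc)).det_pos
  have hdet_le := det_one_add_smul_gram_le x hx hc
  rw [Fintype.card_fin, Fintype.card_fin] at hdet_le
  calc (1 / 2 : ℝ) * Real.log ((1 + (σ ^ 2)⁻¹ • K).det)
      ≤ 1 / 2 * Real.log ((1 + c * T) ^ d) := by
        rw [hKgram]; gcongr
    _ = (d / 2 : ℝ) * Real.log (1 + τ ^ 2 * T / σ ^ 2) := by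
        rw [Real.log_pow, show c * T = τ ^ 2 * T / σ ^ 2 by simp only [c]; ring]
        ring

/-- Information gain of the amplitude-scaled linear kernel: if `‖x_i‖ ≤ 1` and
`K_{ij} = τ² ⟨x_i, x_j⟩`, then
`(1/2) log det(I_T + σ^{-2} K) ≤ (d/2) log(1 + τ² T / σ²)`. -/
theorem linear_kernel_information_gain (d T : ℕ) (hd : 1 ≤ d) (hT : 1 ≤ T)
    (σ τ : ℝ) (hσ : 0 < σ) (hτ : 0 < τ)
    (x : Fin T → EuclideanSpace ℝ (Fin d)) (hx : ∀ i, ‖x i‖ ≤ 1)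
    (K : Matrix (Fin T) (Fin T) ℝ)
    (hK : ∀ i j, K i j = τ ^ 2 * ⟪x i, x j⟫) :
    (1 / 2 : ℝ) * Real.log ((1 + (σ ^ 2)⁻¹ • K).det) ≤
      (d / 2 : ℝ) * Real.log (1 + τ ^ 2 * T / σ ^ 2) :=
  linear_kernel_information_gain_general d T σ τ x hx K hK
end

section
/- Let K be a T×T real symmetric positive-semidefinite matrix with eigenvalues λ_1 ≥ λ_2 ≥ ⋯ ≥ λ_T ≥ 0 (listed with multiplicity), and let σ > 0. Then for every integer T* with 0 ≤ T* ≤ T, the information gain admits the head–tail decomposition (1/2) · log det(I_T + σ^{-2} K) ≤ (1/2) ∑_{i=1}^{T*} log(1 + σ^{-2} λ_i) + (1/(2σ²)) ∑_{i=T*+1}^{T} λ_i. -/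
/-!
Diagonalising `K` gives `det (I + σ⁻² K) = ∏ i, (1 + σ⁻² λ_i)`, so the information gain is
`½ ∑ i, log (1 + σ⁻² λ_i)`. Split this sum at `T*` and bound every tail term with
`log (1 + x) ≤ x`.
-/

open Matrix Finset

namespace Matrix.IsHermitian

variable {n 𝕜 : Type*} [Fintype n] [DecidableEq n] [RCLike 𝕜] {A : Matrix n n 𝕜}

theorem det_cfc (hA : A.IsHermitian) (f : ℝ → ℝ) :
    (cfc f A).det = ∏ i, (f (hA.eigenvalues i) : 𝕜) := by
  simp [hA.cfc_eq, IsHermitian.cfc, -Unitary.conjStarAlgAut_apply]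

theorem det_one_add_smul (hA : A.IsHermitian) (c : ℝ) :
    (1 + c • A).det = ∏ i, ((1 + c * hA.eigenvalues i : ℝ) : 𝕜) := by
  have hcfc : cfc (fun x => 1 + c * x) A = 1 + c • A := by
    rw [cfc_add .., cfc_const_one .., cfc_const_mul .., cfc_id' ..]
  rw [← hcfc, hA.det_cfc]

end Matrix.IsHermitian

theorem Matrix.PosSemidef.log_det_one_add_smul {n : Type*} [Fintype n] [DecidableEq n]
    {A : Matrix n n ℝ} (hA : A.PosSemidef) {c : ℝ} (hc : 0 ≤ c) :
    Real.log (1 + c • A).det = ∑ i, Real.log (1 + c * hA.1.eigenvalues i) := by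
  simp only [hA.1.det_one_add_smul, RCLike.ofReal_real_eq_id, id]
  refine Real.log_prod fun i _ => ?_
  have := hA.eigenvalues_nonneg i
  positivity

theorem Real.sum_log_one_add_mul_le_sum_filter_add {ι : Type*} (s : Finset ι) (p : ι → Prop)
    [DecidablePred p] {c : ℝ} (hc : 0 ≤ c) {x : ι → ℝ} (hx : ∀ i ∈ s, 0 ≤ x i) :
    ∑ i ∈ s, Real.log (1 + c * x i) ≤
      ∑ i ∈ s with p i, Real.log (1 + c * x i) + c * ∑ i ∈ s with ¬ p i, x i := by
  rw [← sum_filter_add_sum_filter_not s p, mul_sum]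
  gcongr with i hi
  have := hx i (mem_filter.1 hi).1
  linarith [Real.log_le_sub_one_of_pos (x := 1 + c * x i) (by positivity)]

theorem information_gain_head_tail_general (T : ℕ) (K : Matrix (Fin T) (Fin T) ℝ)
    (hK : K.PosSemidef) (σ : ℝ)
    (lam : Fin T → ℝ)
    (heig : ∃ e : Equiv.Perm (Fin T), ∀ i, lam (e i) = hK.1.eigenvalues i)
    (Tstar : ℕ) :
    (1 / 2 : ℝ) * Real.log ((1 + (σ ^ 2)⁻¹ • K).det) ≤
      (1 / 2 : ℝ) * ∑ i ∈ univ.filter (fun i : Fin T => (i : ℕ) < Tstar),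
          Real.log (1 + (σ ^ 2)⁻¹ * lam i) +
        (1 / (2 * σ ^ 2)) * ∑ i ∈ univ.filter (fun i : Fin T => Tstar ≤ (i : ℕ)),
          lam i := by
  obtain ⟨e, he⟩ := heig
  have hlam : ∀ i, 0 ≤ lam i := fun i => by
    rw [← e.apply_symm_apply i, he]
    exact hK.eigenvalues_nonneg _
  have hc : 0 ≤ (σ ^ 2)⁻¹ := by positivity
  have hreindex : ∑ i, Real.log (1 + (σ ^ 2)⁻¹ * hK.1.eigenvalues i) =
      ∑ i, Real.log (1 + (σ ^ 2)⁻¹ * lam i) :=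
    Fintype.sum_equiv e _ _ fun i => by rw [he]
  have hsplit := Real.sum_log_one_add_mul_le_sum_filter_add univ
    (fun i : Fin T => (i : ℕ) < Tstar) hc fun i _ => hlam i
  simp only [not_lt] at hsplit
  rw [hK.log_det_one_add_smul hc, hreindex, show 1 / (2 * σ ^ 2) = 1 / 2 * (σ ^ 2)⁻¹ by ring]
  linarith

/-- Head–tail decomposition of the information gain: if `K` is a real symmetric
positive-semidefinite `T × T` matrix with eigenvalues `λ_1 ≥ ⋯ ≥ λ_T ≥ 0`
(listed with multiplicity) and `σ > 0`, then for every `0 ≤ T* ≤ T`,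
`(1/2) log det(I_T + σ^{-2} K)
  ≤ (1/2) ∑_{i ≤ T*} log(1 + σ^{-2} λ_i) + (1/(2σ²)) ∑_{i > T*} λ_i`. -/
theorem information_gain_head_tail (T : ℕ) (K : Matrix (Fin T) (Fin T) ℝ)
    (hK : K.PosSemidef) (σ : ℝ) (hσ : 0 < σ)
    (lam : Fin T → ℝ) (hmono : Antitone lam) (hnonneg : ∀ i, 0 ≤ lam i)
    (heig : ∃ e : Equiv.Perm (Fin T), ∀ i, lam (e i) = hK.1.eigenvalues i)
    (Tstar : ℕ) (hTstar : Tstar ≤ T) :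
    (1 / 2 : ℝ) * Real.log ((1 + (σ ^ 2)⁻¹ • K).det) ≤
      (1 / 2 : ℝ) * ∑ i ∈ univ.filter (fun i : Fin T => (i : ℕ) < Tstar),
          Real.log (1 + (σ ^ 2)⁻¹ * lam i) +
        (1 / (2 * σ ^ 2)) * ∑ i ∈ univ.filter (fun i : Fin T => Tstar ≤ (i : ℕ)),
          lam i :=
  information_gain_head_tail_general T K hK σ lam heig Tstar
end

section
/- Suppose: (i) for every t ∈ {1, …, T} and every x ∈ D, |f(x) − m_t(x)| ≤ √(β_t) · √(σ_{g,N}²(x) + σ_{δ,t−1}²(x)); (ii) for every t, the query point x_t maximizes x ↦ m_t(x) + √(β_t) · √(σ_{g,N}²(x) + σ_{δ,t−1}²(x)) over D; (iii) there is γ_g ≥ 0 with 2γ_g < N such that for every x ∈ D, ∑_{i=1}^N log(1 + σ_0^{-2} σ_{g,i−1}²(x)) ≤ 2γ_g; and (iv) there is γ_δ ≥ 0 such that ∑_{t=1}^T log(1 + σ_{δ,t−1}²(x_t) / (σ_{g,N}²(x_t) + σ²)) ≤ 2γ_δ. Then the cumulative regret satisfies R_T := ∑_{t=1}^T (f(x*)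 − f(x_t)) ≤ √( 8 T β_T ( T γ_g σ_0² / (N − 2γ_g) + C_2 γ_δ ( 2 γ_g σ_0² / (N − 2γ_g) + σ² ) ) ). -/
open Matrix Finset

/-- Posterior variance with (possibly point-dependent) noise variance `ν`:
`κ(x,x) − k_n(x)ᵀ (K_n + ν(x) I_n)⁻¹ k_n(x)`. -/
noncomputable def postVarNoise {D : Type*} (κ : D → D → ℝ) (xs : ℕ → D)
    (ν : D → ℝ) (n : ℕ) (y : D) : ℝ :=
  κ y y -
    kerVec κ xs n y ⬝ᵥ
      ((kerMat κ xs n + ν y • (1 : Matrix (Fin n) (Fin n) ℝ))⁻¹ *ᵥ kerVec κ xs n y)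

/-- Source posterior variance `σ_{g,i}²(x)` after `i` source observations with
noise variance `σ_0²`. -/
noncomputable def sigmaG {D : Type*} (k_g : D → D → ℝ) (x0 : ℕ → D) (σ0 : ℝ)
    (i : ℕ) (x : D) : ℝ :=
  postVarNoise k_g x0 (fun _ => σ0 ^ 2) i x

/-- Difference posterior variance `σ_{δ,t}²(x)` after `t` target observations,
with heteroscedastic noise variance `σ_{g,N}²(x) + σ²`. -/
noncomputable def sigmaD {D : Type*} (k_g k_δ : D → D → ℝ) (x0 xq : ℕ → D)
    (σ0 σ : ℝ) (N t : ℕ) (x : D) : ℝ :=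
  postVarNoise k_δ xq (fun y => sigmaG k_g x0 σ0 N y + σ ^ 2) t x

/-!
By the UCB rule each instantaneous regret is at most `2 √β_T σ_t(x_t)`, where
`σ_t² = σ_{g,N}² + σ_{δ,t-1}²`, so Cauchy–Schwarz reduces the theorem to bounding `∑ₜ σ_t²(x_t)`.
A posterior variance is a Schur complement, hence nonnegative and at most the prior variance, and
it is the minimum of a quadratic in the weights, hence antitone in the number of observations.
Antitonicity turns (iii) into `N log (1 + σ_{g,N}²/σ_0²) ≤ 2γ_g`, and `log (1 + u) ≥ u / (1 + u)`
then bounds `σ_{g,N}²` uniformly by `2γ_g σ_0² / (N - 2γ_g)`. Since the difference model sees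
noise of variance between `σ²` and `σ² + 2γ_g σ_0² / (N - 2γ_g)`, concavity of `log (1 + u)`
bounds each `σ_{δ,t-1}²(x_t)` by a multiple of the corresponding term of (iv).
-/

namespace Matrix

variable {ι κ R : Type*} [Fintype ι] [Fintype κ]

theorem dotProduct_extend_zero [NonUnitalNonAssocSemiring R] {e : ι → κ}
    (he : Function.Injective e) (w : ι → R) (v : κ → R) :
    Function.extend e w 0 ⬝ᵥ v = w ⬝ᵥ (v ∘ e) := by
  refine (Fintype.sum_of_injective e he _ _ (fun j hj => ?_) fun i => ?_).symm
  · rw [Function.extend_apply' _ _ _ (by simpa using hj), Pi.zero_apply, zero_mul]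
  · rw [he.extend_apply, Function.comp_apply]

theorem extend_zero_dotProduct_mulVec [CommSemiring R] {e : ι → κ}
    (he : Function.Injective e) (w : ι → R) (M : Matrix κ κ R) :
    Function.extend e w 0 ⬝ᵥ (M *ᵥ Function.extend e w 0) = w ⬝ᵥ (M.submatrix e e *ᵥ w) := by
  rw [dotProduct_extend_zero he]
  congr 1
  ext i
  simp only [Function.comp_apply, mulVec, dotProduct_comm (M (e i)), dotProduct_extend_zero he]
  exact dotProduct_comm _ _

variable [DecidableEq ι]

theorem mulVec_nonsing_inv_mulVec [CommRing R] {A : Matrix ι ι R} (hA : IsUnit A.det)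
    (b : ι → R) : A *ᵥ (A⁻¹ *ᵥ b) = b := by
  rw [mulVec_mulVec, mul_nonsing_inv A hA, one_mulVec]

/-- The variational characterisation of `b ⬝ᵥ A⁻¹ *ᵥ b`, attained at `w = A⁻¹ *ᵥ b`. -/
theorem PosDef.two_mul_dotProduct_sub_le {A : Matrix ι ι ℝ} (hA : A.PosDef) (b w : ι → ℝ) :
    2 * (w ⬝ᵥ b) - w ⬝ᵥ (A *ᵥ w) ≤ b ⬝ᵥ (A⁻¹ *ᵥ b) := by
  set u := A⁻¹ *ᵥ b
  have hAu : A *ᵥ u = b := mulVec_nonsing_inv_mulVec ((isUnit_iff_isUnit_det A).mp hA.isUnit) b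
  have hsymm : u ⬝ᵥ (A *ᵥ w) = b ⬝ᵥ w := by
    rw [dotProduct_mulVec, ← mulVec_transpose, ← conjTranspose_eq_transpose_of_trivial,
      hA.isHermitian.eq, hAu]
  have hsq := hA.posSemidef.dotProduct_mulVec_nonneg (w - u)
  simp only [star_trivial, mulVec_sub, dotProduct_sub, sub_dotProduct, hsymm, hAu] at hsq
  linarith [dotProduct_comm b w, dotProduct_comm b u]

theorem PosSemidef.dotProduct_inv_add_smul_one_mulVec_le {K : Matrix ι ι ℝ} {b : ι → ℝ}
    {c ν : ℝ} (hK : (fromBlocks K (replicateCol Unit b) (replicateRow Unit b)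
      (of fun _ _ => c)).PosSemidef) (hν : 0 < ν) :
    b ⬝ᵥ ((K + ν • 1)⁻¹ *ᵥ b) ≤ c := by
  have hA : (K + ν • 1).PosDef :=
    PosDef.posSemidef_add (hK.submatrix Sum.inl) (PosDef.one.smul hν)
  have := hA.isUnit.invertible
  have hnoise : (fromBlocks (ν • 1 : Matrix ι ι ℝ) 0 0 (0 : Matrix Unit Unit ℝ)).PosSemidef := by
    rw [smul_one_eq_diagonal, ← diagonal_zero, fromBlocks_diagonal]
    exact PosSemidef.diagonal fun i => by cases i <;> simp [hν.le]
  have hschur := (hA.fromBlocks₁₁ (replicateCol Unit b) (of fun _ _ => c)).mp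
    (by simpa [fromBlocks_add] using hK.add hnoise)
  have hentry := hschur.diag_nonneg (i := ())
  rwa [conjTranspose_replicateCol, star_trivial, Matrix.mul_assoc, ← replicateCol_mulVec,
    sub_apply, replicateRow_mul_replicateCol_apply, of_apply, sub_nonneg] at hentry

end Matrix

def IsPosSemidefKernel {D : Type*} (κ : D → D → ℝ) : Prop :=
  ∀ (n : ℕ) (z : Fin n → D), (Matrix.of fun i j => κ (z i) (z j)).PosSemidef

namespace IsPosSemidefKernel

variable {D : Type*} {κ : D → D → ℝ}

theorem posSemidef (hκ : IsPosSemidefKernel κ) {ι : Type*} [Fintype ι] (z : ι → D) :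
    (Matrix.of fun i j => κ (z i) (z j)).PosSemidef := by
  convert (hκ _ (z ∘ (Fintype.equivFin ι).symm)).submatrix (Fintype.equivFin ι) using 1
  ext i j
  simp

theorem symm (hκ : IsPosSemidefKernel κ) (a b : D) : κ a b = κ b a := by
  simpa using ((hκ 2 ![a, b]).isHermitian.apply 0 1).symm

theorem posSemidef_fromBlocks (hκ : IsPosSemidefKernel κ) {ι : Type*} [Fintype ι] (z : ι → D)
    (y : D) :
    (fromBlocks (Matrix.of fun i j => κ (z i) (z j)) (replicateCol Unit fun i => κ (z i) y)
      (replicateRow Unit fun i => κ (z i) y) (Matrix.of fun _ _ => κ y y)).PosSemidef := by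
  convert hκ.posSemidef (Sum.elim z fun _ : Unit => y) using 1
  ext (i | _) (j | _) <;> simp [hκ.symm y]

end IsPosSemidefKernel

section PosteriorVariance

variable {D : Type*} {κ : D → D → ℝ} {xs : ℕ → D} {ν : D → ℝ} {n : ℕ} {y : D}

theorem posDef_kerMat_add_smul_one (hκ : IsPosSemidefKernel κ) {c : ℝ} (hc : 0 < c) :
    (kerMat κ xs n + c • 1).PosDef :=
  PosDef.posSemidef_add (hκ n fun i => xs i) (PosDef.one.smul hc)

theorem postVarNoise_nonneg (hκ : IsPosSemidefKernel κ) (hν : 0 < ν y) :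
    0 ≤ postVarNoise κ xs ν n y :=
  sub_nonneg.2 <| (hκ.posSemidef_fromBlocks (fun i : Fin n => xs i) y)
    |>.dotProduct_inv_add_smul_one_mulVec_le hν

theorem postVarNoise_le (hκ : IsPosSemidefKernel κ) (hν : 0 < ν y) :
    postVarNoise κ xs ν n y ≤ κ y y := by
  have := (posDef_kerMat_add_smul_one (xs := xs) (n := n) hκ hν).inv.posSemidef
    |>.dotProduct_mulVec_nonneg (kerVec κ xs n y)
  rw [star_trivial] at this
  exact sub_le_self _ this

/-- The optimal weights for the first `i` points, padded with zeros, are admissible in the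
variational problem for the first `n`. -/
theorem postVarNoise_le_postVarNoise_of_le (hκ : IsPosSemidefKernel κ) (hν : 0 < ν y) {i : ℕ} (hin : i ≤ n) :
    postVarNoise κ xs ν n y ≤ postVarNoise κ xs ν i y := by
  set e : Fin i → Fin n := Fin.castLE hin
  have he : Function.Injective e := Fin.castLE_injective hin
  set A := kerMat κ xs i + ν y • 1
  set u := A⁻¹ *ᵥ kerVec κ xs i y
  have hAu : A *ᵥ u = kerVec κ xs i y := mulVec_nonsing_inv_mulVec
    ((isUnit_iff_isUnit_det A).mp (posDef_kerMat_add_smul_one hκ hν).isUnit) _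
  have hsub : (kerMat κ xs n + ν y • 1).submatrix e e = A := by
    ext a b
    simp [A, e, kerMat, one_apply, Fin.castLE_inj]
  suffices kerVec κ xs i y ⬝ᵥ u ≤
      kerVec κ xs n y ⬝ᵥ ((kerMat κ xs n + ν y • 1)⁻¹ *ᵥ kerVec κ xs n y) by
    unfold postVarNoise
    linarith
  calc kerVec κ xs i y ⬝ᵥ u = 2 * (u ⬝ᵥ kerVec κ xs i y) - u ⬝ᵥ (A *ᵥ u) := by
        rw [hAu, dotProduct_comm]; ring
    _ = 2 * (Function.extend e u 0 ⬝ᵥ kerVec κ xs n y) -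
        Function.extend e u 0 ⬝ᵥ ((kerMat κ xs n + ν y • 1) *ᵥ Function.extend e u 0) := by
        rw [dotProduct_extend_zero he, extend_zero_dotProduct_mulVec he, hsub]
        rfl
    _ ≤ _ := (posDef_kerMat_add_smul_one hκ hν).two_mul_dotProduct_sub_le _ _

end PosteriorVariance

open Real

theorem mul_log_one_add_le_mul_log_one_add {u A : ℝ} (hu : 0 ≤ u) (huA : u ≤ A) :
    u * log (1 + A) ≤ A * log (1 + u) := by
  rcases hu.eq_or_lt with rfl | hu
  · simp
  have hA : 0 < A := hu.trans_le huA
  have hconc := strictConcaveOn_log_Ioi.concaveOn.2 (Set.mem_Ioi.2 one_pos)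
    (Set.mem_Ioi.2 (by linarith : (0 : ℝ) < 1 + A))
    (by rw [sub_nonneg, div_le_one hA]; exact huA : 0 ≤ 1 - u / A) (by positivity : 0 ≤ u / A)
    (by ring)
  rw [smul_eq_mul, smul_eq_mul, smul_eq_mul, smul_eq_mul, log_one, mul_zero, zero_add,
    show (1 - u / A) * 1 + u / A * (1 + A) = 1 + u by field_simp; ring] at hconc
  calc u * log (1 + A) = A * (u / A * log (1 + A)) := by field_simp
    _ ≤ A * log (1 + u) := by gcongr

theorem Ctwo_nonneg (σ τ : ℝ) : 0 ≤ Ctwo σ τ :=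
  div_nonneg (by positivity) (log_nonneg (by linarith [div_nonneg (sq_nonneg τ) (sq_nonneg σ)]))

/-- `C_2` is the slope of the chord of `u ↦ log (1 + u)` over `[0, τ² / σ²]`. -/
theorem le_Ctwo_mul_log_one_add_div {σ τ s ν : ℝ} (hσ : σ ≠ 0) (hs : 0 ≤ s) (hsτ : s ≤ τ ^ 2)
    (hν : σ ^ 2 ≤ ν) : s ≤ Ctwo σ τ * ν * log (1 + s / ν) := by
  have hν0 : 0 < ν := (by positivity : 0 < σ ^ 2).trans_le hν
  rcases hs.eq_or_lt with rfl | hs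
  · simp
  have hA : s / ν ≤ τ ^ 2 / σ ^ 2 := div_le_div₀ (sq_nonneg τ) hsτ (by positivity) hν
  have hlog : 0 < log (1 + τ ^ 2 / σ ^ 2) :=
    log_pos (by linarith [(by positivity : 0 < s / ν).trans_le hA])
  have := mul_log_one_add_le_mul_log_one_add (by positivity : 0 ≤ s / ν) hA
  rw [Ctwo, div_mul_eq_mul_div, div_mul_eq_mul_div, le_div_iff₀ hlog]
  calc s * log (1 + τ ^ 2 / σ ^ 2) = s / ν * log (1 + τ ^ 2 / σ ^ 2) * ν := by field_simp
    _ ≤ τ ^ 2 / σ ^ 2 * log (1 + s / ν) * ν := by gcongr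
    _ = _ := by ring

theorem sum_postVarNoise_le {D : Type*} {κ : D → D → ℝ} (hκ : IsPosSemidefKernel κ)
    {σ τ B : ℝ} (hσ : σ ≠ 0) (hκτ : ∀ x, κ x x ≤ τ ^ 2) {ν : D → ℝ}
    (hν : ∀ x, σ ^ 2 ≤ ν x ∧ ν x ≤ B) (xq : ℕ → D) (s : Finset ℕ) :
    ∑ t ∈ s, postVarNoise κ xq ν (t - 1) (xq (t - 1)) ≤
      Ctwo σ τ * B *
        ∑ t ∈ s, log (1 + postVarNoise κ xq ν (t - 1) (xq (t - 1)) / ν (xq (t - 1))) := by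
  rw [mul_sum]
  refine sum_le_sum fun t _ => ?_
  obtain ⟨hσν, hνB⟩ := hν (xq (t - 1))
  have hν0 : 0 < ν (xq (t - 1)) := (by positivity : 0 < σ ^ 2).trans_le hσν
  have hvar := postVarNoise_nonneg (xs := xq) (n := t - 1) hκ hν0
  calc _ ≤ Ctwo σ τ * ν (xq (t - 1)) *
        log (1 + postVarNoise κ xq ν (t - 1) (xq (t - 1)) / ν (xq (t - 1))) :=
        le_Ctwo_mul_log_one_add_div hσ hvar ((postVarNoise_le hκ hν0).trans (hκτ _)) hσν
    _ ≤ _ := by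
      gcongr
      · exact log_nonneg (by linarith [div_nonneg hvar hν0.le])
      · exact Ctwo_nonneg σ τ

theorem le_div_sub_of_mul_log_one_add_le {u γ N : ℝ} (hu : 0 ≤ u) (hN : 0 ≤ N) (hγN : γ < N)
    (h : N * log (1 + u) ≤ γ) : u ≤ γ / (N - γ) := by
  have hlog : u / (1 + u) ≤ log (1 + u) := by
    have := one_sub_inv_le_log_of_pos (by linarith : 0 < 1 + u)
    rwa [show 1 - (1 + u)⁻¹ = u / (1 + u) by field_simp; ring] at this
  have : N * u ≤ γ * (1 + u) := by
    rw [← div_le_iff₀ (by linarith), mul_div_assoc]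
    exact (mul_le_mul_of_nonneg_left hlog hN).trans h
  rw [le_div_iff₀ (by linarith)]
  linarith

theorem sigmaG_le_of_sum_log_le {D : Type*} {k_g : D → D → ℝ} (hκ : IsPosSemidefKernel k_g)
    {x0 : ℕ → D} {σ0 γ : ℝ} (hσ0 : σ0 ≠ 0) {N : ℕ} (hγN : 2 * γ < N) {x : D}
    (hgain : ∑ i : Fin N, log (1 + (σ0 ^ 2)⁻¹ * sigmaG k_g x0 σ0 i x) ≤ 2 * γ) :
    sigmaG k_g x0 σ0 N x ≤ 2 * γ * σ0 ^ 2 / (N - 2 * γ) := by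
  have hσ2 : 0 < σ0 ^ 2 := by positivity
  set u := (σ0 ^ 2)⁻¹ * sigmaG k_g x0 σ0 N x
  have hu : 0 ≤ u := mul_nonneg (by positivity) (postVarNoise_nonneg hκ hσ2)
  have hNu : N * log (1 + u) ≤ 2 * γ :=
    calc N * log (1 + u) = ∑ _i : Fin N, log (1 + u) := by simp
      _ ≤ ∑ i : Fin N, log (1 + (σ0 ^ 2)⁻¹ * sigmaG k_g x0 σ0 i x) := by
        refine sum_le_sum fun i _ => log_le_log (by positivity)
          (add_le_add_right (mul_le_mul_of_nonneg_left ?_ (by positivity)) 1)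
        exact postVarNoise_le_postVarNoise_of_le (ν := fun _ => σ0 ^ 2) hκ hσ2 i.isLt.le
      _ ≤ 2 * γ := hgain
  calc sigmaG k_g x0 σ0 N x = σ0 ^ 2 * u := (mul_inv_cancel_left₀ hσ2.ne' _).symm
    _ ≤ σ0 ^ 2 * (2 * γ / (N - 2 * γ)) := by
      gcongr
      exact le_div_sub_of_mul_log_one_add_le hu (Nat.cast_nonneg N) hγN hNu
    _ = 2 * γ * σ0 ^ 2 / (N - 2 * γ) := by ring

theorem sub_le_two_mul_of_abs_sub_le {a a' μ μ' w w' : ℝ} (h' : |a' - μ'| ≤ w')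
    (h : |a - μ| ≤ w) (hmax : μ' + w' ≤ μ + w) : a' - a ≤ 2 * w := by
  linarith [(abs_le.1 h').2, (abs_le.1 h).1]

theorem sum_le_sqrt_of_le_two_mul_sqrt {ι : Type*} {s : Finset ι} {r v β : ι → ℝ} {B S : ℝ}
    (hr : ∀ t ∈ s, r t ≤ 2 * (√(β t) * √(v t))) (hβ : ∀ t ∈ s, β t ≤ B)
    (hv : ∀ t ∈ s, 0 ≤ v t) (hS : ∑ t ∈ s, v t ≤ S) :
    ∑ t ∈ s, r t ≤ √(4 * B * (#s * S)) := by
  have hCS : ∑ t ∈ s, √(v t) ≤ √(#s * S) := by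
    refine le_sqrt_of_sq_le ?_
    calc (∑ t ∈ s, √(v t)) ^ 2 ≤ #s * ∑ t ∈ s, √(v t) ^ 2 := sq_sum_le_card_mul_sum_sq
      _ = #s * ∑ t ∈ s, v t := by rw [sum_congr rfl fun t ht => sq_sqrt (hv t ht)]
      _ ≤ #s * S := by gcongr
  calc ∑ t ∈ s, r t ≤ ∑ t ∈ s, 2 * √B * √(v t) := sum_le_sum fun t ht =>
        (hr t ht).trans (by rw [← mul_assoc]; gcongr; exact hβ t ht)
    _ = 2 * √B * ∑ t ∈ s, √(v t) := (mul_sum _ _ _).symm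
    _ ≤ 2 * √B * √(#s * S) := by gcongr
    _ ≤ √(4 * B * (#s * S)) := by
      rcases le_or_gt B 0 with hB | hB
      · rw [sqrt_eq_zero_of_nonpos hB, mul_zero, zero_mul]
        exact sqrt_nonneg _
      · rw [sqrt_mul (by positivity : (0 : ℝ) ≤ 4 * B), sqrt_mul (by norm_num : (0 : ℝ) ≤ 4),
          show √(4 : ℝ) = 2 by rw [show (4 : ℝ) = 2 ^ 2 by norm_num, sqrt_sq zero_le_two]]
/-- The paper's query point `x_t` is `xq (t - 1)`. -/
theorem deltaBO_cumulative_regret_general {D : Type*}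
    (k_g k_δ : D → D → ℝ)
    (hgpsd : ∀ (n : ℕ) (z : Fin n → D),
      (Matrix.of fun i j => k_g (z i) (z j)).PosSemidef)
    (hδpsd : ∀ (n : ℕ) (z : Fin n → D),
      (Matrix.of fun i j => k_δ (z i) (z j)).PosSemidef)
    (τ σ0 σ : ℝ) (hσ0 : 0 < σ0) (hσ : 0 < σ)
    (hkδbd : ∀ x : D, k_δ x x ≤ τ ^ 2)
    (N T : ℕ) (x0 xq : ℕ → D)
    (f : D → ℝ) (xstar : D)
    (β : ℕ → ℝ)
    (hβmono : ∀ s t : ℕ, 1 ≤ s → s ≤ t → t ≤ T → β s ≤ β t)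
    (m : ℕ → D → ℝ)
    -- (i) confidence bound
    (hconf : ∀ t : ℕ, 1 ≤ t → t ≤ T → ∀ x : D,
      |f x - m t x| ≤ Real.sqrt (β t) *
        Real.sqrt (sigmaG k_g x0 σ0 N x + sigmaD k_g k_δ x0 xq σ0 σ N (t - 1) x))
    -- (ii) UCB acquisition rule: `xq (t-1)` maximizes the acquisition function
    (hmax : ∀ t : ℕ, 1 ≤ t → t ≤ T → ∀ x : D,
      m t x + Real.sqrt (β t) *
          Real.sqrt (sigmaG k_g x0 σ0 N x + sigmaD k_g k_δ x0 xq σ0 σ N (t - 1) x) ≤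
        m t (xq (t - 1)) + Real.sqrt (β t) *
          Real.sqrt (sigmaG k_g x0 σ0 N (xq (t - 1)) +
            sigmaD k_g k_δ x0 xq σ0 σ N (t - 1) (xq (t - 1))))
    -- (iii) source information-gain bound
    (γg : ℝ) (hγg : 0 ≤ γg) (hγgN : 2 * γg < N)
    (hgainG : ∀ x : D,
      ∑ i : Fin N, Real.log (1 + (σ0 ^ 2)⁻¹ * sigmaG k_g x0 σ0 i x) ≤ 2 * γg)
    -- (iv) difference information-gain bound
    (γδ : ℝ)
    (hgainD : ∑ t ∈ Icc 1 T,
      Real.log (1 + sigmaD k_g k_δ x0 xq σ0 σ N (t - 1) (xq (t - 1)) /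
        (sigmaG k_g x0 σ0 N (xq (t - 1)) + σ ^ 2)) ≤ 2 * γδ) :
    ∑ t ∈ Icc 1 T, (f xstar - f (xq (t - 1))) ≤
      Real.sqrt (8 * T * β T *
        (T * γg * σ0 ^ 2 / (N - 2 * γg) +
          Ctwo σ τ * γδ * (2 * γg * σ0 ^ 2 / (N - 2 * γg) + σ ^ 2))) := by
  set Bg := 2 * γg * σ0 ^ 2 / (N - 2 * γg) with hBg_def
  have hBg : 0 ≤ Bg := div_nonneg (by positivity) (by linarith)
  have hg0 : ∀ x, 0 ≤ sigmaG k_g x0 σ0 N x := fun x => postVarNoise_nonneg hgpsd (by positivity)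
  have hnoise : ∀ x, 0 < sigmaG k_g x0 σ0 N x + σ ^ 2 := fun x =>
    add_pos_of_nonneg_of_pos (hg0 x) (by positivity)
  have hg : ∀ x, sigmaG k_g x0 σ0 N x ≤ Bg := fun x =>
    sigmaG_le_of_sum_log_le hgpsd hσ0.ne' hγgN (hgainG x)
  have hδ : ∑ t ∈ Icc 1 T, sigmaD k_g k_δ x0 xq σ0 σ N (t - 1) (xq (t - 1)) ≤
      Ctwo σ τ * (Bg + σ ^ 2) * (2 * γδ) :=
    (sum_postVarNoise_le hδpsd hσ.ne' hkδbd
      (fun x => ⟨by linarith [hg0 x], by linarith [hg x]⟩) xq _).trans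
      (mul_le_mul_of_nonneg_left hgainD (mul_nonneg (Ctwo_nonneg σ τ) (by positivity)))
  have hvar : ∑ t ∈ Icc 1 T, (sigmaG k_g x0 σ0 N (xq (t - 1)) +
      sigmaD k_g k_δ x0 xq σ0 σ N (t - 1) (xq (t - 1))) ≤
      T * Bg + Ctwo σ τ * (Bg + σ ^ 2) * (2 * γδ) := by
    have := sum_le_card_nsmul (Icc 1 T) _ Bg fun t _ => hg (xq (t - 1))
    rw [Nat.card_Icc, add_tsub_cancel_right, nsmul_eq_mul] at this
    rw [sum_add_distrib]
    linarith
  have hregret : ∀ t ∈ Icc 1 T, f xstar - f (xq (t - 1)) ≤ 2 * (√(β t) *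
      √(sigmaG k_g x0 σ0 N (xq (t - 1)) + sigmaD k_g k_δ x0 xq σ0 σ N (t - 1) (xq (t - 1)))) :=
    fun t ht => by
      obtain ⟨h1, hT⟩ := mem_Icc.1 ht
      exact sub_le_two_mul_of_abs_sub_le (hconf t h1 hT xstar) (hconf t h1 hT _)
        (hmax t h1 hT xstar)
  refine (sum_le_sqrt_of_le_two_mul_sqrt hregret
    (fun t ht => hβmono t T (mem_Icc.1 ht).1 (mem_Icc.1 ht).2 le_rfl)
    (fun t _ => add_nonneg (hg0 _) (postVarNoise_nonneg hδpsd (hnoise _))) hvar).trans_eq ?_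
  rw [Nat.card_Icc, add_tsub_cancel_right, hBg_def]
  congr 1
  ring

/-- Cumulative regret bound of DeltaBO: under (i) the confidence bound, (ii) the
UCB acquisition rule, (iii) the source information-gain bound `γ_g` with
`2γ_g < N`, and (iv) the difference information-gain bound `γ_δ`, the cumulative
regret `R_T = ∑_{t=1}^T (f(x*) − f(x_t))` satisfies
`R_T ≤ √(8 T β_T (T γ_g σ_0²/(N − 2γ_g) + C_2 γ_δ (2γ_g σ_0²/(N − 2γ_g) + σ²)))`.
Here the target query `x_t` of the paper is `xq (t-1)`. -/
theorem deltaBO_cumulative_regret {D : Type*} [Fintype D] [Nonempty D]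
    (k_g k_δ : D → D → ℝ)
    (hgsymm : ∀ a b : D, k_g a b = k_g b a)
    (hδsymm : ∀ a b : D, k_δ a b = k_δ b a)
    (hgpsd : ∀ (n : ℕ) (z : Fin n → D),
      (Matrix.of fun i j => k_g (z i) (z j)).PosSemidef)
    (hδpsd : ∀ (n : ℕ) (z : Fin n → D),
      (Matrix.of fun i j => k_δ (z i) (z j)).PosSemidef)
    (τ σ0 σ : ℝ) (hτ : 0 < τ) (hσ0 : 0 < σ0) (hσ : 0 < σ)
    (hkδbd : ∀ x : D, k_δ x x ≤ τ ^ 2)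
    (N T : ℕ) (x0 xq : ℕ → D)
    (f : D → ℝ) (xstar : D) (hstar : ∀ x : D, f x ≤ f xstar)
    (β : ℕ → ℝ) (hβpos : 0 < β 1)
    (hβmono : ∀ s t : ℕ, 1 ≤ s → s ≤ t → t ≤ T → β s ≤ β t)
    (m : ℕ → D → ℝ)
    -- (i) confidence bound
    (hconf : ∀ t : ℕ, 1 ≤ t → t ≤ T → ∀ x : D,
      |f x - m t x| ≤ Real.sqrt (β t) *
        Real.sqrt (sigmaG k_g x0 σ0 N x + sigmaD k_g k_δ x0 xq σ0 σ N (t - 1) x))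
    -- (ii) UCB acquisition rule: `xq (t-1)` maximizes the acquisition function
    (hmax : ∀ t : ℕ, 1 ≤ t → t ≤ T → ∀ x : D,
      m t x + Real.sqrt (β t) *
          Real.sqrt (sigmaG k_g x0 σ0 N x + sigmaD k_g k_δ x0 xq σ0 σ N (t - 1) x) ≤
        m t (xq (t - 1)) + Real.sqrt (β t) *
          Real.sqrt (sigmaG k_g x0 σ0 N (xq (t - 1)) +
            sigmaD k_g k_δ x0 xq σ0 σ N (t - 1) (xq (t - 1))))
    -- (iii) source information-gain bound
    (γg : ℝ) (hγg : 0 ≤ γg) (hγgN : 2 * γg < N)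
    (hgainG : ∀ x : D,
      ∑ i : Fin N, Real.log (1 + (σ0 ^ 2)⁻¹ * sigmaG k_g x0 σ0 i x) ≤ 2 * γg)
    -- (iv) difference information-gain bound
    (γδ : ℝ) (hγδ : 0 ≤ γδ)
    (hgainD : ∑ t ∈ Icc 1 T,
      Real.log (1 + sigmaD k_g k_δ x0 xq σ0 σ N (t - 1) (xq (t - 1)) /
        (sigmaG k_g x0 σ0 N (xq (t - 1)) + σ ^ 2)) ≤ 2 * γδ) :
    ∑ t ∈ Icc 1 T, (f xstar - f (xq (t - 1))) ≤
      Real.sqrt (8 * T * β T *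
        (T * γg * σ0 ^ 2 / (N - 2 * γg) +
          Ctwo σ τ * γδ * (2 * γg * σ0 ^ 2 / (N - 2 * γg) + σ ^ 2))) :=
  deltaBO_cumulative_regret_general k_g k_δ hgpsd hδpsd τ σ0 σ hσ0 hσ hkδbd N T x0 xq f xstar β
    hβmono m hconf hmax γg hγg hγgN hgainG γδ hgainD
end
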